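/- Let G be a connected finite graph and ω, ω' two 1-forms whose harmonic parts differ by an element of the dual lattice H₁(G,ℤ)^∨ (i.e., they induce the same character of H₁(G,ℤ)). Then the twisted vertex adjacency matrices A_ω and A_{ω'} are similar (conjugate by a diagonal unitary matrix composed with equality), and the twisted edge adjacency matrices W_{1,ω} and W_{1,ω'} are isospectral. -/

import Mathlib

/-!
Write `τ = ω - ω'`. The hypothesis says that `τ` has integral periods: its sum along any closed
walk is an integer, because the walk defines an integral 1-cycle on which `τ` pairs to that sum.
Summing `τ` along walks to a base point of the connected graph therefore gives a potential
`f : V → ℝ` with `τ = df` modulo `ℤ`, so `χ_ω = χ_{ω'} · χ_{df}`. The diagonal matrix with entries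
`e^{-2πi f(v)}` conjugates `A_{ω'}` into `A_ω`, and the diagonal matrix with entries
`e^{-2πi f(d(1))}` on darts conjugates `W_{1,ω'}` into `W_{1,ω}`.
-/

/-- A finite (multi)graph, given by its set of vertices and its set of darts
(oriented edges): each unoriented edge corresponds to a pair `{d, inv d}` of darts. -/
structure Multigraph where
  V : Type
  D : Type
  fintypeV : Fintype V
  fintypeD : Fintype D
  decEqV : DecidableEq V
  decEqD : DecidableEq D
  inv : D → D
  inv_inv : ∀ d, inv (inv d) = d
  inv_ne : ∀ d, inv d ≠ d
  head : D → V

instance (G : Multigraph) : Fintype G.V := G.fintypeV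
instance (G : Multigraph) : Fintype G.D := G.fintypeD
instance (G : Multigraph) : DecidableEq G.V := G.decEqV
instance (G : Multigraph) : DecidableEq G.D := G.decEqD

namespace Multigraph

variable (G : Multigraph)

/-- The initial vertex `d(0)` of an oriented edge. -/
def tail (d : G.D) : G.V := G.head (G.inv d)

/-- Two vertices are adjacent if some oriented edge goes from one to the other. -/
def Adj (v w : G.V) : Prop := ∃ d : G.D, G.tail d = v ∧ G.head d = w

/-- The graph is connected. -/
def Connected : Prop := Nonempty G.V ∧ ∀ v w : G.V, Relation.ReflTransGen G.Adj v w

/-- `ω` is a 1-form: it changes sign under reversal of orientation. -/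
def IsOneForm (ω : G.D → ℝ) : Prop := ∀ d, ω (G.inv d) = - ω d

end Multigraph

namespace Multigraph

variable (G : Multigraph)

/-- The value `χ_ω(d) = e^{2πi ω(d)}` of the character attached to `ω` on a dart. -/
noncomputable def chi (ω : G.D → ℝ) (d : G.D) : ℂ :=
  Complex.exp (2 * Real.pi * Complex.I * (ω d))

/-- `a` feeds into `b`: `a(1) = b(0)` and `b ≠ a⁻¹`. -/
def feeds (a b : G.D) : Prop := G.head a = G.tail b ∧ b ≠ G.inv a

instance (a b : G.D) : Decidable (G.feeds a b) :=
  inferInstanceAs (Decidable (_ ∧ _))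

/-- The (untwisted) edge adjacency matrix `W₁`. -/
noncomputable def W1 : Matrix G.D G.D ℂ :=
  fun a b => if G.feeds a b then 1 else 0

/-- The edge adjacency matrix twisted by `χ_ω`: entry `χ_ω(b)` when `a` feeds into `b`. -/
noncomputable def W1t (ω : G.D → ℝ) : Matrix G.D G.D ℂ :=
  fun a b => if G.feeds a b then G.chi ω b else 0

/-- The vertex adjacency matrix twisted by `χ_ω`. -/
noncomputable def A (ω : G.D → ℝ) : Matrix G.V G.V ℂ :=
  fun v w => ∑ d ∈ Finset.univ.filter (fun d : G.D => G.tail d = v ∧ G.head d = w),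
    G.chi ω d

end Multigraph

namespace Multigraph

variable (G : Multigraph)

/-- The set of integral 1-cycles: `H₁(G,ℤ)`, realized as antisymmetric
integer-valued functions on darts with vanishing boundary at every vertex. -/
def H1set : Set (G.D → ℤ) :=
  {α | (∀ d, α (G.inv d) = - α d) ∧
    ∀ v : G.V, ∑ d ∈ Finset.univ.filter (fun d : G.D => G.head d = v), α d = 0}

/-- The pairing `ω(α)` between a 1-form `ω` and an integral 1-chain `α`. -/
noncomputable def pairingZ (ω : G.D → ℝ) (α : G.D → ℤ) : ℝ :=
  (1 / 2) * ∑ d : G.D, ω d * (α d : ℝ)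

end Multigraph

open Complex Matrix

section

variable {n R : Type*} [Fintype n] [DecidableEq n] [CommRing R] {P M M' : Matrix n n R}

lemma Matrix.eq_inv_mul_mul_of_mul_eq_mul (hP : IsUnit P) (h : P * M' = M * P) :
    M' = P⁻¹ * M * P := by
  rw [mul_assoc, ← h, nonsing_inv_mul_cancel_left]
  exact (isUnit_iff_isUnit_det P).1 hP

lemma Matrix.charpoly_eq_of_mul_eq_mul (hP : IsUnit P) (h : P * M' = M * P) :
    M'.charpoly = M.charpoly := by
  obtain ⟨u, rfl⟩ := hP
  rw [eq_inv_mul_mul_of_mul_eq_mul u.isUnit h, charpoly_units_conj']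

end

namespace Multigraph

variable {G : Multigraph}

variable (G) in
lemma inv_involutive : Function.Involutive G.inv := G.inv_inv

lemma head_inv (d : G.D) : G.head (G.inv d) = G.tail d := rfl

lemma IsOneForm.sub {ω ω' : G.D → ℝ} (hω : G.IsOneForm ω) (hω' : G.IsOneForm ω') :
    G.IsOneForm (ω - ω') := fun d => by simp only [Pi.sub_apply, hω d, hω' d]; ring

inductive IsWalk (G : Multigraph) : List G.D → G.V → G.V → Prop
  | nil (v : G.V) : G.IsWalk [] v v
  | cons (d : G.D) {w : G.V} {l : List G.D} : G.IsWalk l (G.head d) w →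
      G.IsWalk (d :: l) (G.tail d) w

lemma exists_isWalk_of_reflTransGen {u v : G.V} (h : Relation.ReflTransGen G.Adj u v) :
    ∃ l, G.IsWalk l u v := by
  induction h using Relation.ReflTransGen.head_induction_on with
  | refl => exact ⟨[], .nil v⟩
  | head hadj _ ih =>
    obtain ⟨d, rfl, rfl⟩ := hadj
    obtain ⟨l, hl⟩ := ih
    exact ⟨d :: l, .cons d hl⟩

variable (G) in
def walkChain : List G.D → G.D → ℤ
  | [] => 0
  | x :: l => Pi.single x 1 - Pi.single (G.inv x) 1 + walkChain l

lemma walkChain_inv (l : List G.D) (d : G.D) :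
    G.walkChain l (G.inv d) = -G.walkChain l d := by
  induction l with
  | nil => simp [walkChain]
  | cons x l ih =>
    simp only [walkChain, Pi.add_apply, Pi.sub_apply, Pi.single_apply, ih,
      G.inv_involutive.eq_iff, G.inv_inv]
    ring

lemma sum_head_eq_walkChain {l : List G.D} {u v : G.V} (hl : G.IsWalk l u v) (w : G.V) :
    ∑ d ∈ Finset.univ.filter (fun d => G.head d = w), G.walkChain l d
      = (if v = w then 1 else 0) - (if u = w then 1 else 0) := by
  induction hl with
  | nil => simp [walkChain]
  | cons x _ ih =>
    simp only [walkChain, Pi.add_apply, Pi.sub_apply, Finset.sum_add_distrib,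
      Finset.sum_sub_distrib, Finset.sum_pi_single', Finset.mem_filter, Finset.mem_univ,
      true_and, head_inv, ih]
    ring

lemma walkChain_sub_mem_H1set {l l' : List G.D} {u v : G.V} (hl : G.IsWalk l u v)
    (hl' : G.IsWalk l' u v) : G.walkChain l - G.walkChain l' ∈ G.H1set := by
  refine ⟨fun d => ?_, fun w => ?_⟩
  · simp only [Pi.sub_apply, walkChain_inv]
    ring
  · simp only [Pi.sub_apply, Finset.sum_sub_distrib, sum_head_eq_walkChain hl,
      sum_head_eq_walkChain hl', sub_self]

lemma pairingZ_add (ω : G.D → ℝ) (α β : G.D → ℤ) :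
    G.pairingZ ω (α + β) = G.pairingZ ω α + G.pairingZ ω β := by
  simp only [pairingZ, Pi.add_apply, Int.cast_add, mul_add, Finset.sum_add_distrib]

lemma pairingZ_sub (ω : G.D → ℝ) (α β : G.D → ℤ) :
    G.pairingZ ω (α - β) = G.pairingZ ω α - G.pairingZ ω β := by
  simp only [pairingZ, Pi.sub_apply, Int.cast_sub, mul_sub, Finset.sum_sub_distrib]

lemma pairingZ_single (ω : G.D → ℝ) (x : G.D) :
    G.pairingZ ω (Pi.single x 1) = ω x / 2 := by
  simp only [pairingZ, Pi.single_apply, Int.cast_ite, Int.cast_one, Int.cast_zero, mul_ite,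
    mul_one, mul_zero, Finset.sum_ite_eq', Finset.mem_univ, if_true]
  ring

lemma pairingZ_walkChain {τ : G.D → ℝ} (hτ : G.IsOneForm τ) (l : List G.D) :
    G.pairingZ τ (G.walkChain l) = (l.map τ).sum := by
  induction l with
  | nil => simp [walkChain, pairingZ]
  | cons x l ih =>
    rw [walkChain, pairingZ_add, pairingZ_sub, pairingZ_single, pairingZ_single, hτ x, ih,
      List.map_cons, List.sum_cons]
    ring

lemma exists_potential (hG : G.Connected) {τ : G.D → ℝ} (hτ : G.IsOneForm τ)
    (h : ∀ α ∈ G.H1set, ∃ k : ℤ, G.pairingZ τ α = k) :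
    ∃ f : G.V → ℝ, ∀ d, ∃ k : ℤ, τ d = f (G.head d) - f (G.tail d) + k := by
  obtain ⟨⟨v₀⟩, hconn⟩ := hG
  choose p hp using fun v => exists_isWalk_of_reflTransGen (hconn v v₀)
  refine ⟨fun v => -((p v).map τ).sum, fun d => ?_⟩
  obtain ⟨k, hk⟩ := h _ (walkChain_sub_mem_H1set (.cons d (hp (G.head d))) (hp (G.tail d)))
  rw [pairingZ_sub, pairingZ_walkChain hτ, pairingZ_walkChain hτ, List.map_cons,
    List.sum_cons] at hk
  exact ⟨k, by linarith⟩

lemma chi_gauge {ω ω' : G.D → ℝ} {f : G.V → ℝ}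
    (hf : ∀ d, ∃ k : ℤ, (ω - ω') d = f (G.head d) - f (G.tail d) + k) (d : G.D) :
    exp (-(2 * Real.pi * I * f (G.tail d))) * G.chi ω' d
      = G.chi ω d * exp (-(2 * Real.pi * I * f (G.head d))) := by
  obtain ⟨k, hk⟩ := hf d
  simp only [chi, ← exp_add]
  refine exp_eq_exp_iff_exists_int.2 ⟨-k, ?_⟩
  have hk' : (ω d : ℂ) - ω' d = f (G.head d) - f (G.tail d) + k := by exact_mod_cast hk
  push_cast
  linear_combination -(2 * Real.pi * I) * hk'

variable {ω ω' : G.D → ℝ} {s : G.V → ℂ}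

lemma diagonal_mul_A
    (hs : ∀ d, s (G.tail d) * G.chi ω' d = G.chi ω d * s (G.head d)) :
    diagonal s * G.A ω' = G.A ω * diagonal s := by
  ext v w
  simp only [diagonal_mul, mul_diagonal, A, Finset.mul_sum, Finset.sum_mul]
  refine Finset.sum_congr rfl fun d hd => ?_
  obtain ⟨rfl, rfl⟩ := (Finset.mem_filter.1 hd).2
  exact hs d

lemma diagonal_mul_W1t
    (hs : ∀ d, s (G.tail d) * G.chi ω' d = G.chi ω d * s (G.head d)) :
    diagonal (s ∘ G.head) * G.W1t ω' = G.W1t ω * diagonal (s ∘ G.head) := by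
  ext a b
  simp only [diagonal_mul, mul_diagonal, W1t, Function.comp_apply]
  split_ifs with hab
  · rw [hab.1]
    exact hs b
  · simp

end Multigraph

open Multigraph

/-- if the 1-forms `ω` and `ω'` induce the same character of
`H₁(G,ℤ)` — equivalently, `ω - ω'` pairs integrally with every integral 1-cycle,
i.e. the harmonic parts of `ω` and `ω'` differ by an element of the dual lattice
`H₁(G,ℤ)^∨` — then `A_ω` and `A_{ω'}` are similar, and `W_{1,ω}` and `W_{1,ω'}`
are isospectral (same characteristic polynomial). -/
theorem same_character_similar_isospectral (G : Multigraph) (hG : G.Connected)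
    (ω ω' : G.D → ℝ) (hω : G.IsOneForm ω) (hω' : G.IsOneForm ω')
    (h : ∀ α ∈ G.H1set, ∃ k : ℤ, G.pairingZ (ω - ω') α = (k : ℝ)) :
    (∃ P : Matrix G.V G.V ℂ, IsUnit P ∧ G.A ω' = P⁻¹ * G.A ω * P) ∧
    (G.W1t ω).charpoly = (G.W1t ω').charpoly := by
  obtain ⟨f, hf⟩ := exists_potential hG (hω.sub hω') h
  set s : G.V → ℂ := fun v => exp (-(2 * Real.pi * I * f v))
  have hs : ∀ v, IsUnit (s v) := fun v => (exp_ne_zero _).isUnit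
  have hP : IsUnit (diagonal s) := isUnit_diagonal.2 (Pi.isUnit_iff.2 hs)
  have hQ : IsUnit (diagonal (s ∘ G.head)) := isUnit_diagonal.2 (Pi.isUnit_iff.2 fun d => hs _)
  exact ⟨⟨diagonal s, hP, eq_inv_mul_mul_of_mul_eq_mul hP (diagonal_mul_A (chi_gauge hf))⟩,
    (charpoly_eq_of_mul_eq_mul hQ (diagonal_mul_W1t (chi_gauge hf))).symm⟩
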